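/- If X ~ Gamma(α₁, λ) and Y ~ Gamma(α₂, λ) are independent with common rate λ, then E[1 − √(XY)/((X+Y)/2)] = 1 − 2·Γ(α₁+1/2)·Γ(α₂+1/2)/((α₁+α₂)·Γ(α₁)·Γ(α₂)). -/

import Mathlib

/-!
Write `G = √(xy)` and `A = (x + y) / 2`. Since `1 / (x + y) = ∫₀^∞ e^{-t(x+y)} dt`, the ratio
`G / A` equals `2 ∫₀^∞ √x e^{-tx} · √y e^{-ty} dt`, which separates the variables. By Tonelli and
independence, `E[G / A] = 2 ∫₀^∞ L₁(t) L₂(t) dt`, where `Lᵢ(t) = E[√Xᵢ e^{-tXᵢ}]`. For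
`X ~ Gamma(α, λ)` this is `λ^α Γ(α + 1/2) / (Γ(α) (λ + t)^(α + 1/2))`, and the remaining
integral `∫₀^∞ (λ + t)^{-(α₁ + α₂ + 1)} dt = λ^{-(α₁ + α₂)} / (α₁ + α₂)` makes every power of `λ`
cancel.
-/

open MeasureTheory Real ProbabilityTheory Set
open scoped ENNReal

noncomputable def geomArithRatio (x y : ℝ) : ℝ := √(x * y) / ((x + y) / 2)

lemma measurable_geomArithRatio : Measurable fun p : ℝ × ℝ ↦ geomArithRatio p.1 p.2 := by
  unfold geomArithRatio
  fun_prop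

lemma geomArithRatio_nonneg {x y : ℝ} (hx : 0 ≤ x) (hy : 0 ≤ y) : 0 ≤ geomArithRatio x y :=
  div_nonneg (sqrt_nonneg _) (by linarith)

lemma geomArithRatio_le_one {x y : ℝ} (hx : 0 ≤ x) (hy : 0 ≤ y) : geomArithRatio x y ≤ 1 :=
  div_le_one_of_le₀ (sqrt_le_iff.mpr ⟨by linarith, by nlinarith [sq_nonneg (x - y)]⟩)
    (by linarith)

lemma integrable_geomArithRatio {μ : Measure (ℝ × ℝ)} [IsFiniteMeasure μ]
    (h : ∀ᵐ p ∂μ, 0 ≤ p.1 ∧ 0 ≤ p.2) : Integrable (fun p ↦ geomArithRatio p.1 p.2) μ := by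
  refine (integrable_const 1).mono' measurable_geomArithRatio.aestronglyMeasurable ?_
  filter_upwards [h] with p ⟨hp₁, hp₂⟩
  rw [norm_of_nonneg (geomArithRatio_nonneg hp₁ hp₂)]
  exact geomArithRatio_le_one hp₁ hp₂

lemma ae_pos_prod {μ ν : Measure ℝ} [SFinite ν] (hμ : ∀ᵐ x ∂μ, 0 < x) (hν : ∀ᵐ y ∂ν, 0 < y) :
    ∀ᵐ p ∂μ.prod ν, 0 < p.1 ∧ 0 < p.2 :=
  (Measure.quasiMeasurePreserving_fst.ae hμ).and (Measure.quasiMeasurePreserving_snd.ae hν)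

lemma lintegral_rpow_mul_exp_neg_mul_Ioi {a r : ℝ} (ha : 0 < a) (hr : 0 < r) :
    ∫⁻ x in Ioi 0, ENNReal.ofReal (x ^ (a - 1) * exp (-(r * x)))
      = ENNReal.ofReal ((1 / r) ^ a * Gamma a) := by
  have hint : IntegrableOn (fun x : ℝ ↦ x ^ (a - 1) * exp (-(r * x))) (Ioi 0) := by
    simpa only [rpow_one, neg_mul] using
      integrableOn_rpow_mul_exp_neg_mul_rpow (s := a - 1) (p := 1) (by linarith) zero_lt_one hr
  rw [← integral_rpow_mul_exp_neg_mul_Ioi ha hr, ofReal_integral_eq_lintegral_ofReal hint]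
  filter_upwards [self_mem_ae_restrict measurableSet_Ioi] with x (hx : 0 < x)
  positivity

lemma lintegral_exp_neg_mul_Ioi {c : ℝ} (hc : 0 < c) :
    ∫⁻ t in Ioi 0, ENNReal.ofReal (exp (-(c * t))) = ENNReal.ofReal (1 / c) := by
  simpa using lintegral_rpow_mul_exp_neg_mul_Ioi one_pos hc

lemma lintegral_add_rpow_neg_Ioi {s c : ℝ} (hs : 1 < s) (hc : 0 < c) :
    ∫⁻ t in Ioi 0, ENNReal.ofReal ((c + t) ^ (-s)) = ENNReal.ofReal (c ^ (1 - s) / (s - 1)) := by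
  have hshift : ∫⁻ t in Ioi 0, ENNReal.ofReal ((c + t) ^ (-s))
      = ∫⁻ u in Ioi c, ENNReal.ofReal (u ^ (-s)) := by
    rw [(measurePreserving_add_left volume c).setLIntegral_comp_emb
      (measurableEmbedding_addLeft c) (fun u ↦ ENNReal.ofReal (u ^ (-s))), image_const_add_Ioi,
      add_zero]
  rw [hshift, ← ofReal_integral_eq_lintegral_ofReal (integrableOn_Ioi_rpow_of_lt (by linarith) hc),
    integral_Ioi_rpow_of_lt (by linarith) hc]
  · congr 1
    rw [neg_div, ← div_neg]
    ring_nf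
  · filter_upwards [self_mem_ae_restrict measurableSet_Ioi] with x (hx : c < x)
    have : 0 < x := hc.trans hx
    positivity

lemma ofReal_geomArithRatio_eq_two_mul_lintegral {x y : ℝ} (hx : 0 < x) (hy : 0 < y) :
    ENNReal.ofReal (geomArithRatio x y)
      = 2 * ∫⁻ t in Ioi 0,
          ENNReal.ofReal (√x * exp (-(t * x))) * ENNReal.ofReal (√y * exp (-(t * y))) := by
  have hsplit : ∀ t, ENNReal.ofReal (√x * exp (-(t * x))) * ENNReal.ofReal (√y * exp (-(t * y)))
      = ENNReal.ofReal √(x * y) * ENNReal.ofReal (exp (-((x + y) * t))) := by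
    intro t
    rw [← ENNReal.ofReal_mul (by positivity), ← ENNReal.ofReal_mul (by positivity),
      sqrt_mul hx.le, show -((x + y) * t) = -(t * x) + -(t * y) by ring, exp_add]
    ring_nf
  simp_rw [hsplit, lintegral_const_mul' _ _ ENNReal.ofReal_ne_top,
    lintegral_exp_neg_mul_Ioi (by linarith : 0 < x + y), ← ENNReal.ofReal_mul (sqrt_nonneg _),
    ← ENNReal.ofReal_ofNat 2, ← ENNReal.ofReal_mul zero_le_two, geomArithRatio]
  congr 1
  field_simp

lemma lintegral_geomArithRatio_prod {μ ν : Measure ℝ} [SFinite μ] [SFinite ν]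
    (hμ : ∀ᵐ x ∂μ, 0 < x) (hν : ∀ᵐ y ∂ν, 0 < y) :
    ∫⁻ p, ENNReal.ofReal (geomArithRatio p.1 p.2) ∂μ.prod ν
      = 2 * ∫⁻ t in Ioi 0, (∫⁻ x, ENNReal.ofReal (√x * exp (-(t * x))) ∂μ) *
          ∫⁻ y, ENNReal.ofReal (√y * exp (-(t * y))) ∂ν := by
  rw [lintegral_congr_ae ((ae_pos_prod hμ hν).mono fun p hp ↦
      ofReal_geomArithRatio_eq_two_mul_lintegral hp.1 hp.2),
    lintegral_const_mul' _ _ ENNReal.ofNat_ne_top, lintegral_lintegral_swap (by fun_prop)]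
  congr 1
  refine lintegral_congr fun t ↦ ?_
  exact lintegral_prod_mul (f := fun x ↦ ENNReal.ofReal (√x * exp (-(t * x))))
    (g := fun y ↦ ENNReal.ofReal (√y * exp (-(t * y)))) (by fun_prop) (by fun_prop)

lemma measurable_gammaPDF (a r : ℝ) : Measurable (gammaPDF a r) :=
  (measurable_gammaPDFReal a r).ennreal_ofReal

instance (a r : ℝ) : SFinite (gammaMeasure a r) := by
  unfold gammaMeasure
  infer_instance

lemma ae_pos_gammaMeasure (a r : ℝ) : ∀ᵐ x ∂gammaMeasure a r, 0 < x := by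
  rw [gammaMeasure, ae_withDensity_iff (measurable_gammaPDF a r)]
  filter_upwards [Measure.ae_ne volume 0] with x hx0 hpdf
  exact hx0.symm.lt_of_le (not_lt.mp fun hneg ↦ hpdf (gammaPDF_of_neg hneg))

lemma lintegral_rpow_mul_exp_gammaMeasure {a r s t : ℝ} (ha : 0 < a) (hr : 0 ≤ r)
    (hs : 0 < a + s) (ht : 0 < r + t) :
    ∫⁻ x, ENNReal.ofReal (x ^ s * exp (-(t * x))) ∂gammaMeasure a r
      = ENNReal.ofReal (r ^ a * Gamma (a + s) / (Gamma a * (r + t) ^ (a + s))) := by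
  have hG := Gamma_pos_of_pos ha
  have hpdf : ∀ᵐ x ∂volume.restrict (Ioi 0), gammaPDF a r x < ∞ :=
    ae_of_all _ fun _ ↦ ENNReal.ofReal_lt_top
  have hdensity : ∀ x ∈ Ioi (0 : ℝ), gammaPDF a r x * ENNReal.ofReal (x ^ s * exp (-(t * x)))
      = ENNReal.ofReal (r ^ a / Gamma a) *
          ENNReal.ofReal (x ^ (a + s - 1) * exp (-((r + t) * x))) := by
    intro x (hx : 0 < x)
    rw [gammaPDF_of_nonneg hx.le, ← ENNReal.ofReal_mul (by positivity),
      ← ENNReal.ofReal_mul (by positivity), show a + s - 1 = (a - 1) + s by ring, rpow_add hx,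
      show -((r + t) * x) = -(r * x) + -(t * x) by ring, exp_add]
    ring_nf
  rw [← Measure.restrict_eq_self_of_ae_mem (s := Ioi 0) (ae_pos_gammaMeasure a r), gammaMeasure,
    restrict_withDensity measurableSet_Ioi,
    lintegral_withDensity_eq_lintegral_mul_non_measurable _ (measurable_gammaPDF a r) hpdf,
    Pi.mul_def, setLIntegral_congr_fun measurableSet_Ioi hdensity,
    lintegral_const_mul' _ _ ENNReal.ofReal_ne_top, lintegral_rpow_mul_exp_neg_mul_Ioi hs ht,
    ← ENNReal.ofReal_mul (by positivity)]
  congr 1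
  rw [one_div, inv_rpow ht.le]
  ring

lemma lintegral_geomArithRatio_gammaMeasure_prod {α₁ α₂ l : ℝ} (hα₁ : 0 < α₁) (hα₂ : 0 < α₂)
    (hl : 0 < l) :
    ∫⁻ p, ENNReal.ofReal (geomArithRatio p.1 p.2) ∂(gammaMeasure α₁ l).prod (gammaMeasure α₂ l)
      = ENNReal.ofReal (2 * Gamma (α₁ + 1/2) * Gamma (α₂ + 1/2) /
          ((α₁ + α₂) * Gamma α₁ * Gamma α₂)) := by
  have hG₁ := Gamma_pos_of_pos hα₁
  have hG₂ := Gamma_pos_of_pos hα₂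
  have hG₁' := Gamma_pos_of_pos (by linarith : 0 < α₁ + 1/2)
  have hG₂' := Gamma_pos_of_pos (by linarith : 0 < α₂ + 1/2)
  set C := l ^ α₁ * Gamma (α₁ + 1/2) / Gamma α₁ * (l ^ α₂ * Gamma (α₂ + 1/2) / Gamma α₂)
  have hC : 0 ≤ C := by positivity
  have hlaplace : ∀ t ∈ Ioi (0 : ℝ),
      (∫⁻ x, ENNReal.ofReal (√x * exp (-(t * x))) ∂gammaMeasure α₁ l) *
        ∫⁻ y, ENNReal.ofReal (√y * exp (-(t * y))) ∂gammaMeasure α₂ l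
      = ENNReal.ofReal C * ENNReal.ofReal ((l + t) ^ (-(α₁ + α₂ + 1))) := by
    intro t (ht : 0 < t)
    have hlt : 0 < l + t := by linarith
    simp_rw [sqrt_eq_rpow]
    rw [lintegral_rpow_mul_exp_gammaMeasure hα₁ hl.le (by linarith) hlt,
      lintegral_rpow_mul_exp_gammaMeasure hα₂ hl.le (by linarith) hlt,
      ← ENNReal.ofReal_mul (by positivity), ← ENNReal.ofReal_mul hC]
    congr 1
    rw [show -(α₁ + α₂ + 1) = -(α₁ + 1/2) + -(α₂ + 1/2) by ring, rpow_add hlt (-(α₁ + 1/2)),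
      rpow_neg hlt.le, rpow_neg hlt.le]
    simp only [C]
    field_simp
  rw [lintegral_geomArithRatio_prod (ae_pos_gammaMeasure _ _) (ae_pos_gammaMeasure _ _),
    setLIntegral_congr_fun measurableSet_Ioi hlaplace,
    lintegral_const_mul' _ _ ENNReal.ofReal_ne_top,
    lintegral_add_rpow_neg_Ioi (by linarith) hl, ← ENNReal.ofReal_mul hC,
    ← ENNReal.ofReal_ofNat 2, ← ENNReal.ofReal_mul zero_le_two]
  congr 1
  rw [show 1 - (α₁ + α₂ + 1) = -α₁ + -α₂ by ring, add_sub_cancel_right, rpow_add hl,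
    rpow_neg hl.le, rpow_neg hl.le]
  have := (rpow_pos_of_pos hl α₁).ne'
  have := (rpow_pos_of_pos hl α₂).ne'
  have := (add_pos hα₁ hα₂).ne'
  simp only [C]
  field_simp

lemma integral_geomArithRatio_gammaMeasure_prod {α₁ α₂ l : ℝ} (hα₁ : 0 < α₁) (hα₂ : 0 < α₂)
    (hl : 0 < l) :
    ∫ p, geomArithRatio p.1 p.2 ∂(gammaMeasure α₁ l).prod (gammaMeasure α₂ l)
      = 2 * Gamma (α₁ + 1/2) * Gamma (α₂ + 1/2) / ((α₁ + α₂) * Gamma α₁ * Gamma α₂) := by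
  have hpos := ae_pos_prod (ae_pos_gammaMeasure α₁ l) (ae_pos_gammaMeasure α₂ l)
  rw [integral_eq_lintegral_of_nonneg_ae
      (hpos.mono fun p hp ↦ geomArithRatio_nonneg hp.1.le hp.2.le)
      measurable_geomArithRatio.aestronglyMeasurable,
    lintegral_geomArithRatio_gammaMeasure_prod hα₁ hα₂ hl, ENNReal.toReal_ofReal]
  have := Gamma_pos_of_pos (by linarith : 0 < α₁ + 1/2)
  have := Gamma_pos_of_pos (by linarith : 0 < α₂ + 1/2)
  have := Gamma_pos_of_pos hα₁
  have := Gamma_pos_of_pos hα₂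
  positivity

/-- For independent `X ~ Gamma(α₁, λ)`, `Y ~ Gamma(α₂, λ)` with common rate,
`E[1 − √(XY)/((X+Y)/2)] = 1 − 2Γ(α₁+1/2)Γ(α₂+1/2)/((α₁+α₂)Γ(α₁)Γ(α₂))`. -/
theorem atkinson_gamma {Ω : Type*} [MeasurableSpace Ω]
    (P : Measure Ω) [IsProbabilityMeasure P] (X Y : Ω → ℝ)
    (hX : Measurable X) (hY : Measurable Y)
    (α₁ α₂ l : ℝ) (hα₁ : 0 < α₁) (hα₂ : 0 < α₂) (hl : 0 < l)
    (hXlaw : Measure.map X P = gammaMeasure α₁ l)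
    (hYlaw : Measure.map Y P = gammaMeasure α₂ l)
    (hindep : IndepFun X Y P) :
    ∫ ω, (1 - Real.sqrt (X ω * Y ω) / ((X ω + Y ω) / 2)) ∂P
      = 1 - 2 * Real.Gamma (α₁ + 1/2) * Real.Gamma (α₂ + 1/2) /
          ((α₁ + α₂) * Real.Gamma α₁ * Real.Gamma α₂) := by
  have := isProbabilityMeasure_gammaMeasure hα₁ hl
  have := isProbabilityMeasure_gammaMeasure hα₂ hl
  have hlaw : P.map (fun ω ↦ (X ω, Y ω)) = (gammaMeasure α₁ l).prod (gammaMeasure α₂ l) := by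
    rw [← hXlaw, ← hYlaw]
    exact (indepFun_iff_map_prod_eq_prod_map_map hX.aemeasurable hY.aemeasurable).mp hindep
  have hint : Integrable (fun p : ℝ × ℝ ↦ geomArithRatio p.1 p.2)
      ((gammaMeasure α₁ l).prod (gammaMeasure α₂ l)) :=
    integrable_geomArithRatio <| (ae_pos_prod (ae_pos_gammaMeasure α₁ l)
      (ae_pos_gammaMeasure α₂ l)).mono fun p hp ↦ ⟨hp.1.le, hp.2.le⟩
  calc ∫ ω, (1 - √(X ω * Y ω) / ((X ω + Y ω) / 2)) ∂P
      = ∫ p, (1 - geomArithRatio p.1 p.2) ∂(gammaMeasure α₁ l).prod (gammaMeasure α₂ l) := by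
        rw [← hlaw, integral_map (f := fun p : ℝ × ℝ ↦ 1 - geomArithRatio p.1 p.2) (by fun_prop)
          (measurable_const.sub measurable_geomArithRatio).aestronglyMeasurable]
        rfl
    _ = _ := by
        rw [integral_sub (integrable_const 1) hint, integral_const, probReal_univ, one_smul,
          integral_geomArithRatio_gammaMeasure_prod hα₁ hα₂ hl]
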